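/- Let (G,L) be an uncolorable pair and suppose G is a block (i.e., G is connected and has no separating vertex). Then every edge e of G joining vertices v and w satisfies L(v) = σ(e)·L(w). Moreover: (1) if all edges of G are positive, then there is a color set C with L(v) = C for all v ∈ V(G); (2) if G has at least one negative edge, then either there is a symmetric color set C with L(v) = C for all v ∈ V(G), or G is balanced with parts X, Y and there is a color set C with L(v) = C for all v ∈ X and L(v) = −C for all v ∈ Y. As a consequence, G is regular. -/

import Mathlib

open scoped Classical

/-- A signed graph: a finite loopless multigraph together with a sign `+1` or `-1`
on each edge. -/
structure SignedGraph where
  /-- vertex type -/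
  V : Type
  /-- edge type -/
  E : Type
  fintypeV : Fintype V
  fintypeE : Fintype E
  decEqV : DecidableEq V
  /-- the two (distinct) endpoints of an edge, as an unordered pair -/
  ends : E → Sym2 V
  loopless : ∀ e : E, ¬ (ends e).IsDiag
  /-- the sign of an edge -/
  sign : E → ℤ
  sign_unit : ∀ e : E, sign e = 1 ∨ sign e = -1

attribute [instance] SignedGraph.fintypeV SignedGraph.fintypeE SignedGraph.decEqV

namespace SignedGraph

variable (G : SignedGraph)

/-- The degree of a vertex: the number of edges incident with it. -/
noncomputable def degree (v : G.V) : ℕ :=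
  (Finset.univ.filter (fun e : G.E => v ∈ G.ends e)).card

/-- The maximum degree `Δ(G)`. -/
noncomputable def maxDegree : ℕ :=
  Finset.univ.sup (fun v : G.V => G.degree v)

/-- Two vertices are adjacent if some edge joins them. -/
def Adj (v w : G.V) : Prop := ∃ e : G.E, G.ends e = s(v, w)

/-- The simple graph of the adjacency relation (underlying simplification). -/
def adjGraph : SimpleGraph G.V where
  Adj := G.Adj
  symm := ⟨fun _ _ h => by obtain ⟨e, he⟩ := h; exact ⟨e, he.trans (Sym2.eq_swap)⟩⟩
  loopless := ⟨fun v h => by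
    obtain ⟨e, he⟩ := h
    exact G.loopless e (by rw [he]; exact Sym2.mk_isDiag_iff.mpr rfl)⟩

/-- A signed graph is connected if its underlying graph is connected. -/
def Connected : Prop := G.adjGraph.Connected

/-- The underlying graph is simple: no two parallel edges. -/
def SimpleUnderlying : Prop := ∀ e f : G.E, G.ends e = G.ends f → e = f

/-- A (proper) coloring of a signed graph. -/
def IsColoring (φ : G.V → ℤ) : Prop :=
  ∀ (e : G.E) (v w : G.V), G.ends e = s(v, w) → φ v ≠ G.sign e * φ w

/-- The color set `Z_k`:  `Z_{2h} = {±1, …, ±h}` and `Z_{2h+1} = Z_{2h} ∪ {0}`. -/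
def ZSet (k : ℕ) : Set ℤ := {x : ℤ | 2 * |x| ≤ (k : ℤ) ∧ (x = 0 → Odd k)}

/-- The signed chromatic number `χ±(G)`: the least `k` such that `G` admits a
coloring with image contained in `Z_k`. -/
noncomputable def signedChromaticNumber : ℕ :=
  sInf {k : ℕ | ∃ φ : G.V → ℤ, G.IsColoring φ ∧ ∀ v : G.V, φ v ∈ ZSet k}

/-- `G` admits a coloring from the lists `L`. -/
def ListColorable (L : G.V → Finset ℤ) : Prop :=
  ∃ φ : G.V → ℤ, G.IsColoring φ ∧ ∀ v : G.V, φ v ∈ L v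

/-- The signed choice number `χℓ±(G)`. -/
noncomputable def signedChoiceNumber : ℕ :=
  sInf {k : ℕ | ∀ L : G.V → Finset ℤ, (∀ v : G.V, (L v).card = k) → G.ListColorable L}

/-- `G` is degree choosable. -/
def DegreeChoosable : Prop :=
  ∀ L : G.V → Finset ℤ, (∀ v : G.V, (L v).card = G.degree v) → G.ListColorable L

/-- `(G, L)` is an uncolorable pair. -/
def UncolorablePair (L : G.V → Finset ℤ) : Prop :=
  G.Connected ∧ (∀ v : G.V, G.degree v ≤ (L v).card) ∧ ¬ G.ListColorable L

/-- Walks in a signed multigraph. -/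
inductive Walk (G : SignedGraph) : G.V → G.V → Type
  | nil (v : G.V) : Walk G v v
  | cons {v w u : G.V} (e : G.E) (he : G.ends e = s(v, w)) (p : Walk G w u) : Walk G v u

namespace Walk

variable {G}

/-- The list of edges of a walk. -/
def edges : ∀ {v w : G.V}, Walk G v w → List G.E
  | _, _, .nil _ => []
  | _, _, .cons e _ p => e :: edges p

/-- The list of vertices of a walk. -/
def support : ∀ {v w : G.V}, Walk G v w → List G.V
  | _, _, .nil v => [v]
  | v, _, .cons _ _ p => v :: support p

/-- The length of a walk. -/
def length {v w : G.V} (p : Walk G v w) : ℕ := p.edges.length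

/-- The sign product of a walk. -/
def signProd {v w : G.V} (p : Walk G v w) : ℤ := (p.edges.map G.sign).prod

/-- A cycle: a nonempty closed walk with no repeated edges and no repeated
vertices (except the first = last). -/
def IsCycle {v : G.V} (p : Walk G v v) : Prop :=
  p.edges ≠ [] ∧ p.edges.Nodup ∧ p.support.tail.Nodup

end Walk

/-- A signed graph is balanced if every cycle has positive sign product. -/
def Balanced : Prop := ∀ (v : G.V) (p : Walk G v v), p.IsCycle → p.signProd = 1

/-- A signed graph is antibalanced if every even cycle has positive sign product
and every odd cycle has negative sign product. -/
def Antibalanced : Prop :=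
  ∀ (v : G.V) (p : Walk G v v), p.IsCycle → p.signProd = (-1) ^ p.length

/-- `G` is balanced with parts `X`, `Y`: the vertex set is the disjoint union of
`X` and `Y` and an edge is negative iff it joins `X` to `Y`. -/
def BalancedWithParts (X Y : Set G.V) : Prop :=
  X ∪ Y = Set.univ ∧ Disjoint X Y ∧
  ∀ (e : G.E) (v w : G.V), G.ends e = s(v, w) →
    (G.sign e = -1 ↔ (v ∈ X ∧ w ∈ Y) ∨ (v ∈ Y ∧ w ∈ X))

/-- The underlying graph is a complete (simple) graph. -/
def IsCompleteGraph : Prop :=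
  G.SimpleUnderlying ∧ ∀ v w : G.V, v ≠ w → G.Adj v w

/-- `G` is a balanced complete graph. -/
def IsBalancedComplete : Prop := G.IsCompleteGraph ∧ G.Balanced

/-- The underlying graph is a cycle. -/
def IsCycleGraph : Prop :=
  G.Connected ∧ G.SimpleUnderlying ∧ ∀ v : G.V, G.degree v = 2

/-- `G` is a balanced odd cycle. -/
def IsBalancedOddCycle : Prop :=
  G.IsCycleGraph ∧ G.Balanced ∧ Odd (Fintype.card G.V)

/-- `G` is an unbalanced even cycle. -/
def IsUnbalancedEvenCycle : Prop :=
  G.IsCycleGraph ∧ ¬ G.Balanced ∧ Even (Fintype.card G.V)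

/-- Every edge of `G` comes in a pair of parallel edges of opposite sign, and
any two vertices are joined by at most two edges. -/
def Doubled : Prop :=
  ∀ (e : G.E) (v w : G.V), G.ends e = s(v, w) →
    ∃ f : G.E, f ≠ e ∧ G.ends f = s(v, w) ∧ G.sign f = - G.sign e ∧
      ∀ g : G.E, G.ends g = s(v, w) → g = e ∨ g = f

/-- `G` is a `2Kₙ` for some `n ≥ 2`. -/
def IsDoubleComplete : Prop :=
  2 ≤ Fintype.card G.V ∧ G.Doubled ∧ ∀ v w : G.V, v ≠ w → G.Adj v w

/-- `G` is a `2Cₙ` for some odd `n ≥ 3`. -/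
def IsDoubleOddCycle : Prop :=
  G.Connected ∧ G.Doubled ∧ (∀ v : G.V, G.degree v = 4) ∧ Odd (Fintype.card G.V)

/-- A brick. -/
def IsBrick : Prop :=
  G.IsBalancedComplete ∨ G.IsBalancedOddCycle ∨ G.IsUnbalancedEvenCycle ∨
    G.IsDoubleComplete ∨ G.IsDoubleOddCycle

/-- A subgraph of a signed graph. -/
structure Subgraph (G : SignedGraph) where
  verts : Set G.V
  edges : Set G.E
  ends_mem : ∀ e ∈ edges, ∀ v ∈ G.ends e, v ∈ verts

namespace Subgraph

variable {G}

/-- A subgraph, regarded as a signed graph in its own right. -/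
noncomputable def toSG (H : G.Subgraph) : SignedGraph where
  V := H.verts
  E := H.edges
  fintypeV := Fintype.ofFinite _
  fintypeE := Fintype.ofFinite _
  decEqV := inferInstance
  ends := fun e =>
    s((⟨(G.ends e.1).out.1, H.ends_mem e.1 e.2 _ (Sym2.out_fst_mem _)⟩ : H.verts),
      (⟨(G.ends e.1).out.2, H.ends_mem e.1 e.2 _ (Sym2.out_snd_mem _)⟩ : H.verts))
  loopless := fun e h => by
    rw [Sym2.mk_isDiag_iff, Subtype.mk.injEq] at h
    exact G.loopless e.1 (by
      rw [← (G.ends e.1).out_eq]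
      exact Sym2.mk_isDiag_iff.mpr h)
  sign := fun e => G.sign e.1
  sign_unit := fun e => G.sign_unit e.1

/-- Delete a vertex (and all incident edges) from a subgraph. -/
def delete (H : G.Subgraph) (v : G.V) : G.Subgraph where
  verts := H.verts \ {v}
  edges := {e ∈ H.edges | v ∉ G.ends e}
  ends_mem := fun e he w hw =>
    ⟨H.ends_mem e he.1 w hw, fun h => he.2 (by rwa [Set.mem_singleton_iff.mp h] at hw)⟩

/-- Subgraph inclusion. -/
def Le (H K : G.Subgraph) : Prop := H.verts ⊆ K.verts ∧ H.edges ⊆ K.edges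

/-- `v` is a separating (cut) vertex of the subgraph `H`. -/
def IsCutVertex (H : G.Subgraph) (v : G.V) : Prop :=
  v ∈ H.verts ∧ (H.delete v).verts.Nonempty ∧ ¬ (H.delete v).toSG.Connected

/-- `B` is a block of `G`: a maximal connected subgraph without a cut vertex. -/
def IsBlock (B : G.Subgraph) : Prop :=
  B.toSG.Connected ∧ (∀ v : G.V, ¬ B.IsCutVertex v) ∧
  ∀ B' : G.Subgraph, B.Le B' → B'.toSG.Connected →
    (∀ v : G.V, ¬ B'.IsCutVertex v) → B'.Le B

/-- The degree of a vertex in a subgraph. -/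
noncomputable def degree (H : G.Subgraph) (v : G.V) : ℕ :=
  (Finset.univ.filter (fun e : G.E => e ∈ H.edges ∧ v ∈ G.ends e)).card

/-- The minimum degree of a subgraph. -/
noncomputable def minDegree (H : G.Subgraph) : ℕ :=
  sInf {d : ℕ | ∃ v ∈ H.verts, H.degree v = d}

/-- The subgraph admits a coloring from the lists `L`. -/
def ListColorable (H : G.Subgraph) (L : G.V → Finset ℤ) : Prop :=
  ∃ φ : G.V → ℤ,
    (∀ e ∈ H.edges, ∀ v w : G.V, G.ends e = s(v, w) → φ v ≠ G.sign e * φ w) ∧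
    ∀ v ∈ H.verts, φ v ∈ L v

/-- A proper subgraph. -/
def IsProper (H : G.Subgraph) : Prop :=
  H.verts ≠ Set.univ ∨ H.edges ≠ Set.univ

end Subgraph

/-- The subgraph consisting of all of `G`. -/
def topSubgraph : G.Subgraph := ⟨Set.univ, Set.univ, fun _ _ _ _ => trivial⟩

/-- A separating (cut) vertex of `G`. -/
def IsCutVertex (v : G.V) : Prop := G.topSubgraph.IsCutVertex v

/-- The coloring number `col(G)`: one plus the maximum over all (nonempty)
subgraphs of the minimum degree. -/
noncomputable def coloringNumber : ℕ :=
  1 + sSup {d : ℕ | ∃ H : G.Subgraph, H.verts.Nonempty ∧ H.minDegree = d}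

/-- The subgraph induced by a vertex set `X`. -/
def induced (X : Set G.V) : G.Subgraph where
  verts := X
  edges := {e : G.E | ∀ v ∈ G.ends e, v ∈ X}
  ends_mem := fun e he v hv => he v hv

/-- `G` is `L`-critical. -/
def LCritical (L : G.V → Finset ℤ) : Prop :=
  ¬ G.ListColorable L ∧ ∀ H : G.Subgraph, H.IsProper → H.ListColorable L

/-- `G` is `k`-critical (with respect to the signed chromatic number). -/
def KCritical (k : ℕ) : Prop :=
  G.signedChromaticNumber = k ∧
  ∀ H : G.Subgraph, H.IsProper → H.toSG.signedChromaticNumber ≤ k - 1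

/-- `G` is `k`-list-critical. -/
def KListCritical (k : ℕ) : Prop :=
  ∃ L : G.V → Finset ℤ, (∀ v : G.V, (L v).card = k - 1) ∧ G.LCritical L

/-- The signed graph `2H` obtained from a simple graph `H` by replacing every
edge by a pair of parallel edges, one positive and one negative. -/
noncomputable def double {W : Type} [Fintype W] [DecidableEq W] (H : SimpleGraph W) :
    SignedGraph where
  V := W
  E := H.edgeSet × Bool
  fintypeV := inferInstance
  fintypeE := Fintype.ofFinite _
  decEqV := inferInstance
  ends := fun e => e.1.1
  loopless := fun e => H.not_isDiag_of_mem_edgeSet e.1.2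
  sign := fun e => if e.2 then 1 else -1
  sign_unit := fun e => by by_cases h : e.2 <;> simp [h]

end SignedGraph

/-!
A greedy colouring along an order of the vertices in which every vertex but the last has a
neighbour coloured after it succeeds as soon as the last vertex has more colours than its degree
(order by decreasing distance to that vertex). Hence in an uncolorable pair `|L(v)| = d(v)` for
every `v`. For an edge `e = vw` of a block, suppose `c ∈ L(v)` but `σ(e)c ∉ L(w)`: colour `v`
with `c` first and then the connected graph `G - v` greedily towards `w`, which has an extra colour
available; so `σ(e)L(v) ⊆ L(w)`, and by symmetry `L(v) = σ(e)L(w)`. Propagating this along walks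
from a vertex `v₀`, every list is `L(v₀)` or `-L(v₀)`, so `G` is regular, and when these differ the
two classes of vertices balance `G`.
-/

namespace SimpleGraph

variable {V : Type*} {Gr : SimpleGraph V}

theorem Connected.induction_on_adj (hc : Gr.Connected) {P : V → Prop}
    (hstep : ∀ u v, Gr.Adj u v → P u → P v) {u : V} (hu : P u) (v : V) : P v := by
  obtain ⟨p⟩ := hc.preconnected u v
  induction p with
  | nil => exact hu
  | cons hadj _ ih => exact ih (hstep _ _ hadj hu)

theorem Connected.exists_adj_dist_lt (hc : Gr.Connected) {u t : V} (hu : u ≠ t) :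
    ∃ z, Gr.Adj u z ∧ Gr.dist z t < Gr.dist u t := by
  obtain ⟨p, hp⟩ := hc.exists_walk_length_eq_dist u t
  cases p with
  | nil => exact absurd rfl hu
  | cons hadj q =>
    refine ⟨_, hadj, ?_⟩
    have := dist_le q
    rw [Walk.length_cons] at hp
    omega

theorem Connected.exists_injective_adj_lt [Fintype V] (hc : Gr.Connected) (t : V) :
    ∃ idx : V → ℕᵒᵈ ×ₗ ℕ, Function.Injective idx ∧ ∀ u ≠ t, ∃ z, Gr.Adj u z ∧ idx u < idx z := by
  let enum := Fintype.equivFin V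
  refine ⟨fun u => toLex (OrderDual.toDual (Gr.dist u t), (enum u : ℕ)),
    fun a b hab => enum.injective (Fin.ext (congrArg (fun x => (ofLex x).2) hab)),
    fun u hu => ?_⟩
  obtain ⟨z, hadj, hlt⟩ := hc.exists_adj_dist_lt hu
  exact ⟨z, hadj, Prod.Lex.toLex_lt_toLex.mpr (Or.inl hlt)⟩

end SimpleGraph

namespace SignedGraph

open Finset

variable {G : SignedGraph}

theorem ne_of_ends_eq {e : G.E} {v w : G.V} (he : G.ends e = s(v, w)) : v ≠ w := by
  rintro rfl
  exact G.loopless e (he ▸ Sym2.mk_isDiag_iff.mpr rfl)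

theorem sign_mul_self (e : G.E) : G.sign e * G.sign e = 1 := by
  rcases G.sign_unit e with h | h <;> simp [h]

theorem eq_sign_mul_comm (e : G.E) {x y : ℤ} : x = G.sign e * y ↔ y = G.sign e * x := by
  constructor <;> rintro rfl <;> rw [← mul_assoc, sign_mul_self, one_mul]

theorem Subgraph.toSG_adj {H : G.Subgraph} {x y : H.verts} (hxy : H.toSG.Adj x y) :
    G.Adj x y := by
  obtain ⟨e, he⟩ := hxy
  refine ⟨e.1, ?_⟩
  have := congrArg (Sym2.map Subtype.val) he
  simp only [toSG, Sym2.map_mk] at this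
  exact (Quot.out_eq _).symm.trans this

theorem connected_delete_of_not_isCutVertex {v w : G.V} (hv : ¬ G.IsCutVertex v) (hwv : w ≠ v) :
    (G.topSubgraph.delete v).toSG.Connected :=
  not_not.mp fun hcon => hv ⟨trivial, ⟨w, trivial, hwv⟩, hcon⟩

section Greedy

variable {α : Type*} [LinearOrder α]

def backDegree (idx : G.V → α) (v : G.V) : ℕ :=
  #{e | ∃ w, G.ends e = s(v, w) ∧ idx w < idx v}

theorem backDegree_le_degree (idx : G.V → α) (v : G.V) : G.backDegree idx v ≤ G.degree v := by
  refine card_le_card fun e he => ?_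
  obtain ⟨w, he, -⟩ := (mem_filter.mp he).2
  exact mem_filter.mpr ⟨mem_univ e, he ▸ Sym2.mem_mk_left v w⟩

theorem backDegree_lt_degree {idx : G.V → α} {u z : G.V} (hz : G.Adj u z) (hlt : idx u < idx z) :
    G.backDegree idx u < G.degree u := by
  obtain ⟨f, hf⟩ := hz
  refine card_lt_card ((ssubset_iff_of_subset fun e he => ?_).mpr ⟨f, ?_, fun hf' => ?_⟩)
  · obtain ⟨w, he, -⟩ := (mem_filter.mp he).2
    exact mem_filter.mpr ⟨mem_univ e, he ▸ Sym2.mem_mk_left u w⟩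
  · exact mem_filter.mpr ⟨mem_univ f, hf ▸ Sym2.mem_mk_left u z⟩
  · obtain ⟨w, hw, hwu⟩ := (mem_filter.mp hf').2
    rw [Sym2.congr_right.mp (hf.symm.trans hw)] at hlt
    exact lt_asymm hlt hwu

theorem backDegree_eq_zero {idx : G.V → α} {v : G.V} (hv : ∀ w, idx v ≤ idx w) :
    G.backDegree idx v = 0 :=
  card_eq_zero.mpr (filter_eq_empty_iff.mpr fun _ _ ⟨w, _, hw⟩ => (hv w).not_gt hw)

theorem exists_color_avoiding {idx : G.V → α} (hinj : Function.Injective idx) {A : Finset ℤ}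
    {a : G.V} (hA : G.backDegree idx a < #A) (φ : G.V → ℤ) {s : Finset G.V} (has : a ∉ s)
    (hmax : ∀ x ∈ s, idx x ≤ idx a) :
    ∃ c ∈ A, ∀ e, ∀ w ∈ s, G.ends e = s(a, w) → c ≠ G.sign e * φ w := by
  let P : Finset (G.E × G.V) := {p | G.ends p.1 = s(a, p.2) ∧ p.2 ∈ s}
  have hP : #P ≤ G.backDegree idx a := by
    refine card_le_card_of_injOn Prod.fst (fun p hp => ?_) (fun p hp q hq hpq => ?_)
    · obtain ⟨hpa, hps⟩ := (mem_filter.mp hp).2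
      refine mem_filter.mpr ⟨mem_univ _, p.2, hpa, ?_⟩
      exact (hmax _ hps).lt_of_ne (hinj.ne (ne_of_mem_of_not_mem hps has))
    · have hp := (mem_filter.mp hp).2.1
      have hq := (mem_filter.mp hq).2.1
      exact Prod.ext hpq (Sym2.congr_right.mp (hp.symm.trans (hpq ▸ hq)))
  obtain ⟨c, hcA, hc⟩ := exists_mem_notMem_of_card_lt_card
    ((card_image_le.trans hP).trans_lt hA) (s := P.image fun p => G.sign p.1 * φ p.2)
  exact ⟨c, hcA, fun e w hw he hcw => hc (mem_image.mpr ⟨(e, w), by simp [P, he, hw], hcw.symm⟩)⟩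

theorem listColorable_of_backDegree_lt {A : G.V → Finset ℤ} {idx : G.V → α}
    (hinj : Function.Injective idx) (hA : ∀ v, G.backDegree idx v < #(A v)) :
    G.ListColorable A := by
  suffices ∀ s : Finset G.V, ∃ φ : G.V → ℤ, (∀ v ∈ s, φ v ∈ A v) ∧
      ∀ e v w, G.ends e = s(v, w) → v ∈ s → w ∈ s → φ v ≠ G.sign e * φ w by
    obtain ⟨φ, hφA, hφ⟩ := this univ
    exact ⟨φ, fun e v w he => hφ e v w he (mem_univ v) (mem_univ w), fun v => hφA v (mem_univ v)⟩
  intro s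
  induction s using Finset.induction_on_max_value idx with
  | empty => exact ⟨0, by simp, by simp⟩
  | insert a s has hmax ih =>
    obtain ⟨φ, hφA, hφ⟩ := ih
    obtain ⟨c, hcA, hc⟩ := exists_color_avoiding hinj (hA a) φ has hmax
    refine ⟨Function.update φ a c, fun v hv => ?_, fun e v w he hv hw => ?_⟩
    · rcases eq_or_ne v a with rfl | hva
      · simpa
      · simpa [hva] using hφA v ((mem_insert.mp hv).resolve_left hva)
    have hvw := ne_of_ends_eq he
    rcases eq_or_ne v a with rfl | hva
    · simpa [hvw.symm] using hc e w ((mem_insert.mp hw).resolve_left hvw.symm) he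
    rcases eq_or_ne w a with rfl | hwa
    · rw [Function.update_self, Function.update_of_ne hva, Ne, eq_sign_mul_comm]
      exact hc e v ((mem_insert.mp hv).resolve_left hva) (he.trans Sym2.eq_swap)
    · simpa [hva, hwa] using
        hφ e v w he ((mem_insert.mp hv).resolve_left hva) ((mem_insert.mp hw).resolve_left hwa)

end Greedy

theorem listColorable_of_degree_lt (hc : G.Connected) {A : G.V → Finset ℤ}
    (hA : ∀ v, G.degree v ≤ #(A v)) {t : G.V} (ht : G.degree t < #(A t)) :
    G.ListColorable A := by
  obtain ⟨idx, hinj, hlater⟩ := SimpleGraph.Connected.exists_injective_adj_lt hc t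
  refine listColorable_of_backDegree_lt hinj fun u => ?_
  rcases eq_or_ne u t with rfl | hut
  · exact (backDegree_le_degree idx u).trans_lt ht
  · obtain ⟨z, hz, hlt⟩ := hlater u hut
    exact (backDegree_lt_degree hz hlt).trans_le (hA u)

theorem exists_injective_adj_lt_of_not_isCutVertex {v w : G.V} (hv : ¬ G.IsCutVertex v)
    (hwv : w ≠ v) :
    ∃ idx : G.V → WithBot (ℕᵒᵈ ×ₗ ℕ), Function.Injective idx ∧ (∀ u, idx v ≤ idx u) ∧
      ∀ u, u ≠ v → u ≠ w → ∃ z, G.Adj u z ∧ idx u < idx z := by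
  obtain ⟨idx, hinj, hlater⟩ := SimpleGraph.Connected.exists_injective_adj_lt
    (connected_delete_of_not_isCutVertex hv hwv) ⟨w, trivial, hwv⟩
  refine ⟨fun u => if hu : u = v then ⊥ else idx ⟨u, trivial, hu⟩, fun a b hab => ?_,
    fun u => by simp, fun u huv huw => ?_⟩
  · by_cases ha : a = v <;> by_cases hb : b = v
    · rw [ha, hb]
    · simp [ha, hb] at hab
    · simp [ha, hb] at hab
    · simp only [ha, hb, dif_neg, not_false_eq_true, WithBot.coe_inj] at hab
      exact congrArg Subtype.val (hinj hab)
  · obtain ⟨z, hz, hlt⟩ := hlater ⟨u, trivial, huv⟩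
      fun huw' => huw (congrArg Subtype.val huw')
    refine ⟨z.1, Subgraph.toSG_adj hz, ?_⟩
    have hzv : z.1 ≠ v := z.2.2
    simp only [dif_neg huv, dif_neg hzv]
    exact WithBot.coe_lt_coe.mpr hlt

variable {L : G.V → Finset ℤ}

theorem UncolorablePair.degree_eq_card (h : G.UncolorablePair L) (v : G.V) :
    G.degree v = #(L v) :=
  (h.2.1 v).antisymm (not_lt.mp fun hlt => h.2.2 (listColorable_of_degree_lt h.1 h.2.1 hlt))

theorem UncolorablePair.sign_mul_mem (h : G.UncolorablePair L) {e : G.E} {v w : G.V}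
    (hv : ¬ G.IsCutVertex v) (he : G.ends e = s(v, w)) {c : ℤ} (hc : c ∈ L v) :
    G.sign e * c ∈ L w := by
  by_contra hcw
  obtain ⟨idx, hinj, hvmin, hlater⟩ :=
    exists_injective_adj_lt_of_not_isCutVertex hv (ne_of_ends_eq he).symm
  -- Adding `σ(e)c` to `L(w)` cannot help `w`, as `v` gets colour `c`; but now `|A(w)| > d(w)`.
  set A := Function.update (Function.update L w (insert (G.sign e * c) (L w))) v {c}
  have hA : G.ListColorable A := by
    refine listColorable_of_backDegree_lt hinj fun u => ?_
    rcases eq_or_ne u v with rfl | huv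
    · simp [A, backDegree_eq_zero hvmin]
    rcases eq_or_ne u w with rfl | huw
    · simp only [A, Function.update_of_ne huv, Function.update_self, card_insert_of_notMem hcw]
      exact Nat.lt_succ_of_le ((backDegree_le_degree idx u).trans (h.2.1 u))
    · obtain ⟨z, hz, hlt⟩ := hlater u huv huw
      simpa [A, huv, huw] using (backDegree_lt_degree hz hlt).trans_le (h.2.1 u)
  obtain ⟨φ, hφ, hφA⟩ := hA
  have hφv : φ v = c := by simpa [A] using hφA v
  refine h.2.2 ⟨φ, hφ, fun u => ?_⟩
  rcases eq_or_ne u v with rfl | huv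
  · rwa [hφv]
  rcases eq_or_ne u w with rfl | huw
  · have hne : φ u ≠ G.sign e * c := hφv ▸ hφ e u v (he.trans Sym2.eq_swap)
    simpa [A, huv, hne] using hφA u
  · simpa [A, huv, huw] using hφA u

theorem UncolorablePair.list_eq_image (h : G.UncolorablePair L) {e : G.E} {v w : G.V}
    (hv : ¬ G.IsCutVertex v) (hw : ¬ G.IsCutVertex w) (he : G.ends e = s(v, w)) :
    L v = (L w).image (fun x => G.sign e * x) := by
  ext c
  refine ⟨fun hc => mem_image.mpr ⟨_, h.sign_mul_mem hv he hc, ?_⟩, fun hc => ?_⟩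
  · rw [← mul_assoc, sign_mul_self, one_mul]
  · obtain ⟨x, hx, rfl⟩ := mem_image.mp hc
    exact h.sign_mul_mem hw (he.trans Sym2.eq_swap) hx

def SignCompatible (L : G.V → Finset ℤ) : Prop :=
  ∀ (e : G.E) (v w : G.V), G.ends e = s(v, w) → L v = (L w).image (fun x => G.sign e * x)

namespace SignCompatible

open Pointwise

variable {e : G.E} {u v w : G.V}

theorem eq_of_sign_eq_one (hL : G.SignCompatible L) (he : G.ends e = s(v, w))
    (hs : G.sign e = 1) : L v = L w := by
  simpa [hs] using hL e v w he

theorem eq_neg_of_sign_eq_neg_one (hL : G.SignCompatible L) (he : G.ends e = s(v, w))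
    (hs : G.sign e = -1) : L v = -L w := by
  simpa [hs, image_neg_eq_neg] using hL e v w he

theorem eq_or_eq_neg_of_adj (hL : G.SignCompatible L) (hadj : G.Adj u v) :
    L v = L u ∨ L v = -L u := by
  obtain ⟨e, he⟩ := hadj
  rcases G.sign_unit e with hs | hs
  · exact Or.inl (hL.eq_of_sign_eq_one (he.trans Sym2.eq_swap) hs)
  · exact Or.inr (hL.eq_neg_of_sign_eq_neg_one (he.trans Sym2.eq_swap) hs)

theorem eq_or_eq_neg (hL : G.SignCompatible L) (hc : G.Connected) (v₀ v : G.V) :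
    L v = L v₀ ∨ L v = -L v₀ := by
  refine SimpleGraph.Connected.induction_on_adj hc (P := fun v => L v = L v₀ ∨ L v = -L v₀)
    (fun u z hadj hu => ?_) (Or.inl rfl) v
  rcases hL.eq_or_eq_neg_of_adj hadj with h | h <;> rcases hu with hu | hu <;> simp [h, hu]

theorem eq_of_forall_sign_eq_one (hL : G.SignCompatible L) (hc : G.Connected)
    (hpos : ∀ e, G.sign e = 1) (v₀ v : G.V) : L v = L v₀ :=
  SimpleGraph.Connected.induction_on_adj hc (P := fun v => L v = L v₀)
    (fun _ _ ⟨e, he⟩ hu => (hL.eq_of_sign_eq_one (he.trans Sym2.eq_swap) (hpos e)).trans hu)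
    rfl v

theorem balancedWithParts (hL : G.SignCompatible L) (hc : G.Connected) (v₀ : G.V)
    (hsymm : -L v₀ ≠ L v₀) : G.BalancedWithParts {v | L v = L v₀} {v | L v = -L v₀} := by
  refine ⟨Set.eq_univ_of_forall fun v => hL.eq_or_eq_neg hc v₀ v,
    Set.disjoint_left.mpr fun v hX hY => hsymm (hY.symm.trans hX), fun e a b he => ?_⟩
  simp only [Set.mem_ofPred_eq]
  rcases G.sign_unit e with hs | hs
  · rw [hL.eq_of_sign_eq_one he hs, hs]
    refine iff_of_false (by norm_num) ?_
    rintro (⟨h₁, h₂⟩ | ⟨h₁, h₂⟩)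
    · exact hsymm (h₂.symm.trans h₁)
    · exact hsymm (h₁.symm.trans h₂)
  · rw [hL.eq_neg_of_sign_eq_neg_one he hs]
    rcases hL.eq_or_eq_neg hc v₀ b with hb | hb <;> simp [hs, hb]

end SignCompatible

end SignedGraph

open Pointwise in
/-- Lists in an uncolorable pair whose graph is a block. -/
theorem uncolorablePair_block_lists (G : SignedGraph) (L : G.V → Finset ℤ)
    (h : G.UncolorablePair L) (hblock : ∀ v : G.V, ¬ G.IsCutVertex v) :
    (∀ (e : G.E) (v w : G.V), G.ends e = s(v, w) →
        L v = (L w).image (fun x => G.sign e * x)) ∧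
    ((∀ e : G.E, G.sign e = 1) → ∃ C : Finset ℤ, ∀ v : G.V, L v = C) ∧
    ((∃ e : G.E, G.sign e = -1) →
      (∃ C : Finset ℤ, C.image (fun x => -x) = C ∧ ∀ v : G.V, L v = C) ∨
      (∃ X Y : Set G.V, G.BalancedWithParts X Y ∧ ∃ C : Finset ℤ,
        (∀ v ∈ X, L v = C) ∧ ∀ v ∈ Y, L v = C.image (fun x => -x))) ∧
    (∃ r : ℕ, ∀ v : G.V, G.degree v = r) := by
  have hL : G.SignCompatible L := fun e v w he => h.list_eq_image (hblock v) (hblock w) he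
  obtain ⟨v₀⟩ := SimpleGraph.Connected.nonempty h.1
  simp only [Finset.image_neg_eq_neg]
  refine ⟨hL, fun hpos => ⟨L v₀, hL.eq_of_forall_sign_eq_one h.1 hpos v₀⟩, fun _ => ?_,
    ⟨(L v₀).card, fun v => ?_⟩⟩
  · by_cases hsymm : -L v₀ = L v₀
    · exact Or.inl ⟨L v₀, hsymm, fun v => (hL.eq_or_eq_neg h.1 v₀ v).elim id (·.trans hsymm)⟩
    · exact Or.inr ⟨_, _, hL.balancedWithParts h.1 v₀ hsymm, L v₀, fun _ hv => hv, fun _ hv => hv⟩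
  · rcases hL.eq_or_eq_neg h.1 v₀ v with hv | hv <;> simp [h.degree_eq_card v, hv]
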